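/- Let μ : t0 → t1 be a rewrite step via a non-collapsing, left-linear rule r : λ → ρ at hole position q of context C, so t0 = C[λσ] and t1 = C[ρσ]. Let L be a labeling of μ, P1 ⊆ Pos(t1), and P0 = ⋃_{w∈P1} ◁_μ^L w. If some w ∈ P1 is involved in the step (w = q.v' with v' ∈ Pos(ρσ)), then the redex pattern of r is embedded in slice(t0,P0): for every non-variable position v' of λ, the symbol of slice(t0,P0) at q.v' equals the symbol of λ at v'. Consequently, every concretization t0' of slice(t0,P0) can be rewritten by r at position q: t0' = C'[λσ'] → C'[ρσ'] for some context C' and substitution σ', and the resulting term t1' is a concretization of slice(t1,P1). -/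
import Mathlib


open scoped Classical

abbrev Pos := List ℕ

/-- Ground terms over a signature `F` (variadic). -/
inductive GTerm (F : Type) : Type
  | fn : F → List (GTerm F) → GTerm F

/-- Term slices: terms over `F ∪ {•}`. -/
inductive STerm (F : Type) : Type
  | bullet : STerm F
  | fn : F → List (STerm F) → STerm F

/-- Terms with variables over `F`. -/
inductive VTerm (F : Type) : Type
  | var : ℕ → VTerm F
  | fn : F → List (VTerm F) → VTerm F

variable {F : Type}

def GTerm.subtermAt : Pos → GTerm F → Option (GTerm F)
  | [], t => some t
  | i :: p, .fn _ args => (args[i]?).bind (GTerm.subtermAt p)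

def GTerm.isPos (p : Pos) (t : GTerm F) : Prop := (GTerm.subtermAt p t).isSome

def GTerm.rootSym : GTerm F → F
  | .fn f _ => f

def GTerm.rootSymAt (p : Pos) (t : GTerm F) : Option F :=
  (GTerm.subtermAt p t).map GTerm.rootSym

def STerm.subtermAt : Pos → STerm F → Option (STerm F)
  | [], t => some t
  | _ :: _, .bullet => none
  | i :: p, .fn _ args => (args[i]?).bind (STerm.subtermAt p)

def STerm.rootSym : STerm F → Option F
  | .bullet => none
  | .fn f _ => some f

def STerm.rootSymAt (p : Pos) (t : STerm F) : Option F :=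
  (STerm.subtermAt p t).bind STerm.rootSym

/-- Non-`•` positions of a term slice. -/
def STerm.isPos (p : Pos) (t : STerm F) : Prop :=
  ∃ u, STerm.subtermAt p t = some u ∧ u ≠ .bullet

def VTerm.subtermAt : Pos → VTerm F → Option (VTerm F)
  | [], t => some t
  | _ :: _, .var _ => none
  | i :: p, .fn _ args => (args[i]?).bind (VTerm.subtermAt p)

def VTerm.rootSym : VTerm F → Option F
  | .var _ => none
  | .fn f _ => some f

def VTerm.rootSymAt (p : Pos) (t : VTerm F) : Option F :=
  (VTerm.subtermAt p t).bind VTerm.rootSym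

/-- Positions of the redex/contractum pattern: non-variable positions. -/
def VTerm.patPos (p : Pos) (t : VTerm F) : Prop :=
  ∃ f args, VTerm.subtermAt p t = some (.fn f args)

mutual
  def VTerm.subst (σ : ℕ → GTerm F) : VTerm F → GTerm F
    | .var n => σ n
    | .fn f args => .fn f (VTerm.substList σ args)
  def VTerm.substList (σ : ℕ → GTerm F) : List (VTerm F) → List (GTerm F)
    | [] => []
    | a :: as => VTerm.subst σ a :: VTerm.substList σ as
end

mutual
  def GTerm.replaceAt : GTerm F → Pos → GTerm F → GTerm F
    | _, [], r => r
    | .fn f args, i :: p, r => .fn f (GTerm.replaceAtList args i p r)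
  def GTerm.replaceAtList : List (GTerm F) → ℕ → Pos → GTerm F → List (GTerm F)
    | [], _, _, _ => []
    | a :: as, 0, p, r => GTerm.replaceAt a p r :: as
    | a :: as, n + 1, p, r => a :: GTerm.replaceAtList as n p r
end

mutual
  def STerm.replaceAt : STerm F → Pos → STerm F → STerm F
    | _, [], r => r
    | .bullet, _ :: _, _ => .bullet
    | .fn f args, i :: p, r => .fn f (STerm.replaceAtList args i p r)
  def STerm.replaceAtList : List (STerm F) → ℕ → Pos → STerm F → List (STerm F)
    | [], _, _, _ => []
    | a :: as, 0, p, r => STerm.replaceAt a p r :: as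
    | a :: as, n + 1, p, r => a :: STerm.replaceAtList as n p r
end

mutual
  noncomputable def GTerm.slRec (P : Set Pos) : GTerm F → Pos → STerm F
    | .fn f args, p =>
        if ∃ w, (p ++ w) ∈ P then .fn f (GTerm.slRecList P args p 0) else .bullet
  noncomputable def GTerm.slRecList (P : Set Pos) : List (GTerm F) → Pos → ℕ → List (STerm F)
    | [], _, _ => []
    | a :: as, p, i => GTerm.slRec P a (p ++ [i]) :: GTerm.slRecList P as p (i + 1)
end

/-- `slice(t,P)`. -/
noncomputable def GTerm.slice (t : GTerm F) (P : Set Pos) : STerm F := GTerm.slRec P t []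

/-- Concretization: `Conc t• t'` iff replacing the `•`s of `t•` by distinct fresh
variables yields a term more general than `t'`. -/
inductive Conc {F : Type} : STerm F → GTerm F → Prop
  | bullet (t : GTerm F) : Conc .bullet t
  | fn (f : F) (as : List (STerm F)) (bs : List (GTerm F))
      (hlen : as.length = bs.length)
      (h : ∀ (i : ℕ) (a : STerm F) (b : GTerm F),
            as[i]? = some a → bs[i]? = some b → Conc a b) :
      Conc (.fn f as) (.fn f bs)

/-- Origin positions `◁_μ^L w` of a labeled rewrite step `t0 → t1`. -/
def originSet {α : Type} (t0 t1 : GTerm F) (Ls Lt : Pos → Set α) (w : Pos) : Set Pos :=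
  {v | GTerm.isPos v t0 ∧ ∃ p, GTerm.isPos p t1 ∧ p <+: w ∧ Ls v ⊆ Lt p}

/-- A rewrite step with rule `lam → rho` at position `q`. -/
def RewritesAt (lam rho : VTerm F) (q : Pos) (t0 t1 : GTerm F) : Prop :=
  ∃ σ : ℕ → GTerm F, GTerm.subtermAt q t0 = some (VTerm.subst σ lam) ∧
    t1 = GTerm.replaceAt t0 q (VTerm.subst σ rho)

def leftLinear (lam : VTerm F) : Prop :=
  ∀ n p p', VTerm.subtermAt p lam = some (.var n) →
    VTerm.subtermAt p' lam = some (.var n) → p = p'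

def nonCollapsing (rho : VTerm F) : Prop := ∀ n, rho ≠ .var n
/-- The labeling of an (elementary) rewrite step `t0 = C[λσ] → C[ρσ] = t1` at hole
position `q`: every position of `t0` (context, redex pattern, substitution part) carries
a distinct fresh atomic label; context and substitution positions of `t1` carry the
same labels as the corresponding positions of `t0`; every contractum-pattern symbol of
`t1` carries the union of all the redex-pattern labels. -/
structure ElemStepLabeling (F α : Type) (lam rho : VTerm F) (q : Pos) (σ : ℕ → GTerm F)
    (t0 t1 : GTerm F) (Ls Lt : Pos → Set α) : Prop where
  hsub : GTerm.subtermAt q t0 = some (VTerm.subst σ lam)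
  hrepl : t1 = GTerm.replaceAt t0 q (VTerm.subst σ rho)
  atoms : ∀ v, GTerm.isPos v t0 → ∃ a, Ls v = {a}
  inj : ∀ v w, GTerm.isPos v t0 → GTerm.isPos w t0 → Ls v = Ls w → v = w
  ctx_eq : ∀ v, ¬ q <+: v → Lt v = Ls v
  contr : ∀ u', VTerm.patPos u' rho →
      Lt (q ++ u') = ⋃ v' ∈ {p : Pos | VTerm.patPos p lam}, Ls (q ++ v')
  subst_eq : ∀ (u' : Pos) (n : ℕ) (v'' : Pos), VTerm.subtermAt u' rho = some (.var n) →
      ∀ v', VTerm.subtermAt v' lam = some (.var n) →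
        Lt (q ++ u' ++ v'') = Ls (q ++ v' ++ v'')
section Lemmas
variable {F : Type}

theorem GTerm.subtermAt_append (p q : Pos) (t : GTerm F) :
    GTerm.subtermAt (p ++ q) t = (GTerm.subtermAt p t).bind (GTerm.subtermAt q) := by
  induction p generalizing t with
  | nil => simp [GTerm.subtermAt]
  | cons i p ih =>
    cases t with
    | fn f args =>
      simp only [List.cons_append, GTerm.subtermAt]
      cases h : args[i]? with
      | none => simp
      | some a => simp [ih]

theorem VTerm.subtermAt_append (p q : Pos) (t : VTerm F) :
    VTerm.subtermAt (p ++ q) t = (VTerm.subtermAt p t).bind (VTerm.subtermAt q) := by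
  induction p generalizing t with
  | nil => simp [VTerm.subtermAt]
  | cons i p ih =>
    cases t with
    | var n => simp [VTerm.subtermAt]
    | fn f args =>
      simp only [List.cons_append, VTerm.subtermAt]
      cases h : args[i]? with
      | none => simp
      | some a => simp [ih]

theorem VTerm.substList_getElem? (σ : ℕ → GTerm F) (as : List (VTerm F)) (i : ℕ) :
    (VTerm.substList σ as)[i]? = (as[i]?).map (VTerm.subst σ) := by
  induction as generalizing i with
  | nil => simp [VTerm.substList]
  | cons a as ih =>
    cases i with
    | zero => simp [VTerm.substList]
    | succ j => simpa [VTerm.substList] using ih j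

theorem VTerm.substList_length (σ : ℕ → GTerm F) (as : List (VTerm F)) :
    (VTerm.substList σ as).length = as.length := by
  induction as with
  | nil => rfl
  | cons a as ih => simp [VTerm.substList, ih]

theorem VTerm.subst_subtermAt (σ : ℕ → GTerm F) {p : Pos} {l u : VTerm F}
    (h : VTerm.subtermAt p l = some u) :
    GTerm.subtermAt p (VTerm.subst σ l) = some (VTerm.subst σ u) := by
  induction p generalizing l with
  | nil => simp [VTerm.subtermAt] at h; simp [GTerm.subtermAt, h]
  | cons i p ih =>
    cases l with
    | var n => simp [VTerm.subtermAt] at h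
    | fn f args =>
      simp only [VTerm.subtermAt] at h
      cases ha : args[i]? with
      | none => simp [ha] at h
      | some a =>
        simp only [ha, Option.bind_some] at h
        simp [VTerm.subst, GTerm.subtermAt, VTerm.substList_getElem?, ha, ih h]

end Lemmas
section Lemmas2
variable {F : Type}

theorem GTerm.slRecList_getElem? (P : Set Pos) (as : List (GTerm F)) (base : Pos) (i j : ℕ) :
    (GTerm.slRecList P as base i)[j]? = (as[j]?).map (fun a => GTerm.slRec P a (base ++ [i + j])) := by
  induction as generalizing i j with
  | nil => simp [GTerm.slRecList]
  | cons a as ih =>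
    cases j with
    | zero => simp [GTerm.slRecList]
    | succ j =>
      have := ih (i+1) j
      simp only [GTerm.slRecList, List.getElem?_cons_succ, this]
      rw [show i + 1 + j = i + (j + 1) by omega]

theorem GTerm.slRecList_length (P : Set Pos) (as : List (GTerm F)) (base : Pos) (i : ℕ) :
    (GTerm.slRecList P as base i).length = as.length := by
  induction as generalizing i with
  | nil => rfl
  | cons a as ih => simp [GTerm.slRecList, ih]

theorem GTerm.slRec_subtermAt (P : Set Pos) {p : Pos} {t u : GTerm F} (base : Pos)
    (hw : ∃ w, (base ++ p) ++ w ∈ P) (h : GTerm.subtermAt p t = some u) :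
    STerm.subtermAt p (GTerm.slRec P t base) = some (GTerm.slRec P u (base ++ p)) := by
  induction p generalizing t base with
  | nil => simp [GTerm.subtermAt] at h; simp [STerm.subtermAt, h]
  | cons i p ih =>
    cases t with
    | fn f args =>
      simp only [GTerm.subtermAt] at h
      cases ha : args[i]? with
      | none => simp [ha] at h
      | some a =>
        simp only [ha, Option.bind_some] at h
        have hcond : ∃ w, base ++ w ∈ P := by
          obtain ⟨w, hw⟩ := hw
          exact ⟨(i :: p) ++ w, by simpa using hw⟩
        have hw' : ∃ w, ((base ++ [i]) ++ p) ++ w ∈ P := by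
          obtain ⟨w, hw⟩ := hw
          exact ⟨w, by simpa using hw⟩
        simp only [GTerm.slRec, if_pos hcond, STerm.subtermAt,
          GTerm.slRecList_getElem?, ha, Nat.zero_add, Option.map_some, Option.bind_some]
        rw [ih (base ++ [i]) hw' h]
        simp

theorem GTerm.slRec_subtermAt_fn (P : Set Pos) {p : Pos} {t : GTerm F} {f : F}
    {as : List (STerm F)} (base : Pos)
    (h : STerm.subtermAt p (GTerm.slRec P t base) = some (.fn f as)) :
    ∃ args, GTerm.subtermAt p t = some (.fn f args) ∧ as.length = args.length ∧
      ∃ w, (base ++ p) ++ w ∈ P := by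
  induction p generalizing t base with
  | nil =>
    cases t with
    | fn f' args =>
      by_cases hcond : ∃ w, base ++ w ∈ P
      · simp only [GTerm.slRec, if_pos hcond, STerm.subtermAt, Option.some.injEq] at h
        cases h
        exact ⟨args, by simp [GTerm.subtermAt], (GTerm.slRecList_length P args base 0).symm ▸ rfl,
          by simpa using hcond⟩
      · simp [GTerm.slRec, if_neg hcond, STerm.subtermAt] at h
  | cons i p ih =>
    cases t with
    | fn f' args =>
      by_cases hcond : ∃ w, base ++ w ∈ P
      · simp only [GTerm.slRec, if_pos hcond, STerm.subtermAt,
          GTerm.slRecList_getElem?, Nat.zero_add] at h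
        cases ha : args[i]? with
        | none => simp [ha] at h
        | some a =>
          simp only [ha, Option.map_some, Option.bind_some] at h
          obtain ⟨args', h1, h2, w, h3⟩ := ih (base ++ [i]) h
          exact ⟨args', by simp [GTerm.subtermAt, ha, h1], h2, ⟨w, by simpa using h3⟩⟩
      · simp [GTerm.slRec, if_neg hcond, STerm.subtermAt] at h

end Lemmas2
section Lemmas3
variable {F : Type}

/-- shape of an optional term: root symbol and arity. -/
def gshape : Option (GTerm F) → Option (F × ℕ)
  | none => none
  | some (.fn f args) => some (f, args.length)

theorem gshape_eq_none {o : Option (GTerm F)} (h : o = none) : gshape o = none := by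
  rw [h]; rfl

theorem GTerm.replaceAtList_length (as : List (GTerm F)) (j : ℕ) (p : Pos) (r : GTerm F) :
    (GTerm.replaceAtList as j p r).length = as.length := by
  induction as generalizing j with
  | nil => rfl
  | cons a as ih =>
    cases j with
    | zero => simp [GTerm.replaceAtList]
    | succ j => simp [GTerm.replaceAtList, ih]

theorem GTerm.replaceAtList_getElem?_self (as : List (GTerm F)) (j : ℕ) (p : Pos) (r : GTerm F) :
    (GTerm.replaceAtList as j p r)[j]? = (as[j]?).map (fun a => GTerm.replaceAt a p r) := by
  induction as generalizing j with
  | nil => simp [GTerm.replaceAtList]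
  | cons a as ih =>
    cases j with
    | zero => simp [GTerm.replaceAtList]
    | succ j => simpa [GTerm.replaceAtList] using ih j

theorem GTerm.replaceAtList_getElem?_ne (as : List (GTerm F)) {i j : ℕ} (hij : i ≠ j)
    (p : Pos) (r : GTerm F) :
    (GTerm.replaceAtList as j p r)[i]? = as[i]? := by
  induction as generalizing i j with
  | nil => simp [GTerm.replaceAtList]
  | cons a as ih =>
    cases j with
    | zero =>
      cases i with
      | zero => omega
      | succ i => simp [GTerm.replaceAtList]
    | succ j =>
      cases i with
      | zero => simp [GTerm.replaceAtList]
      | succ i => simpa [GTerm.replaceAtList] using ih (by omega)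

theorem GTerm.replaceAt_subtermAt {q : Pos} {t u : GTerm F} (hu : GTerm.subtermAt q t = some u)
    (p : Pos) (r : GTerm F) :
    GTerm.subtermAt (q ++ p) (GTerm.replaceAt t q r) = GTerm.subtermAt p r := by
  induction q generalizing t with
  | nil => simp [GTerm.replaceAt]
  | cons i q ih =>
    cases t with
    | fn f args =>
      simp only [GTerm.subtermAt] at hu
      cases ha : args[i]? with
      | none => simp [ha] at hu
      | some a =>
        simp only [ha, Option.bind_some] at hu
        simp [GTerm.replaceAt, GTerm.subtermAt, GTerm.replaceAtList_getElem?_self, ha, ih hu]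

theorem GTerm.replaceAt_shape {q p : Pos} (hnp : ¬ q <+: p) (t r : GTerm F) :
    gshape (GTerm.subtermAt p (GTerm.replaceAt t q r)) = gshape (GTerm.subtermAt p t) := by
  induction p generalizing q t with
  | nil =>
    cases q with
    | nil => exact absurd List.prefix_rfl hnp
    | cons j q =>
      cases t with
      | fn f args =>
        simp [GTerm.replaceAt, GTerm.subtermAt, gshape, GTerm.replaceAtList_length]
  | cons i p ih =>
    cases q with
    | nil => exact absurd List.nil_prefix hnp
    | cons j q =>
      cases t with
      | fn f args =>
        by_cases hij : i = j
        · subst hij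
          have hq : ¬ q <+: p := fun h => hnp (by simpa using h)
          simp only [GTerm.replaceAt, GTerm.subtermAt, GTerm.replaceAtList_getElem?_self]
          cases ha : args[i]? with
          | none => simp [gshape]
          | some a => simpa using ih hq a
        · simp [GTerm.replaceAt, GTerm.subtermAt,
            GTerm.replaceAtList_getElem?_ne args hij]

theorem GTerm.subtermAt_prefix {p s : Pos} {t u : GTerm F}
    (h : GTerm.subtermAt (p ++ s) t = some u) : ∃ z, GTerm.subtermAt p t = some z := by
  rw [GTerm.subtermAt_append] at h
  cases hz : GTerm.subtermAt p t with
  | none => rw [hz] at h; simp at h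
  | some z => exact ⟨z, rfl⟩

end Lemmas3
section Lemmas4
variable {F : Type}

theorem conc_subtermAt {s : STerm F} {g : GTerm F} (hc : Conc s g) :
    ∀ {p : Pos} {f : F} {as : List (STerm F)}, STerm.subtermAt p s = some (.fn f as) →
      ∃ bs, GTerm.subtermAt p g = some (.fn f bs) ∧ as.length = bs.length := by
  intro p
  induction p generalizing s g with
  | nil =>
    intro f as h
    simp only [STerm.subtermAt, Option.some.injEq] at h
    subst h
    cases hc with
    | fn f as bs hlen hch => exact ⟨bs, by simp [GTerm.subtermAt], hlen⟩
  | cons i p ih =>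
    intro f as h
    cases hc with
    | bullet => simp [STerm.subtermAt] at h
    | fn f' as' bs' hlen hch =>
      simp only [STerm.subtermAt] at h
      cases ha : as'[i]? with
      | none => simp [ha] at h
      | some a =>
        simp only [ha, Option.bind_some] at h
        have hi : i < as'.length := by
          by_contra hlt
          simp [List.getElem?_eq_none (by omega : as'.length ≤ i)] at ha
        have hb : ∃ b, bs'[i]? = some b := by
          refine ⟨bs'[i]'(by omega), ?_⟩
          simp [List.getElem?_eq_getElem (by omega : i < bs'.length)]
        obtain ⟨b, hb⟩ := hb
        obtain ⟨bs, h1, h2⟩ := ih (hch i a b ha hb) h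
        refine ⟨bs, ?_, h2⟩
        simp [GTerm.subtermAt, hb, h1]

theorem sizeOf_lt_of_getElem? {bs : List (GTerm F)} {i : ℕ} {b : GTerm F}
    (h : bs[i]? = some b) {f : F} : sizeOf b < sizeOf (GTerm.fn f bs) := by
  have hm : b ∈ bs := by
    have hi : i < bs.length := by
      by_contra hlt
      simp [List.getElem?_eq_none (by omega : bs.length ≤ i)] at h
    exact List.mem_of_getElem? h
  have := List.sizeOf_lt_of_mem hm
  have h2 : sizeOf (GTerm.fn f bs) = 1 + sizeOf f + sizeOf bs := by simp
  omega

theorem conc_of_pointwise : ∀ (N : ℕ) (g : GTerm F), sizeOf g ≤ N → ∀ (s : STerm F),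
    (∀ (p : Pos) (f : F) (as : List (STerm F)), STerm.subtermAt p s = some (.fn f as) →
      ∃ bs, GTerm.subtermAt p g = some (.fn f bs) ∧ as.length = bs.length) →
    Conc s g := by
  intro N
  induction N with
  | zero =>
    intro g hg
    cases g with
    | fn f args =>
      exfalso
      have h2 : sizeOf (GTerm.fn f args) = 1 + sizeOf f + sizeOf args := by simp
      omega
  | succ N ihN =>
    intro g hg s hyp
    cases s with
    | bullet => exact Conc.bullet g
    | fn f as =>
      obtain ⟨bs, hbs, hlen⟩ := hyp [] f as (by simp [STerm.subtermAt])
      simp only [GTerm.subtermAt, Option.some.injEq] at hbs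
      subst hbs
      refine Conc.fn f as bs hlen ?_
      intro i a b ha hb
      refine ihN b ?_ a ?_
      · have := sizeOf_lt_of_getElem? (f := f) hb
        omega
      · intro p f' as' hp
        have := hyp (i :: p) f' as' (by simp [STerm.subtermAt, ha, hp])
        simpa [GTerm.subtermAt, hb] using this

end Lemmas4
section Lemmas5
variable {F : Type}

theorem VTerm.sizeOf_lt_of_getElem? {bs : List (VTerm F)} {i : ℕ} {b : VTerm F}
    (h : bs[i]? = some b) {f : F} : sizeOf b < sizeOf (VTerm.fn f bs) := by
  have hm : b ∈ bs := by
    have hi : i < bs.length := by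
      by_contra hlt
      simp [List.getElem?_eq_none (by omega : bs.length ≤ i)] at h
    exact List.mem_of_getElem? h
  have := List.sizeOf_lt_of_mem hm
  have h2 : sizeOf (VTerm.fn f bs) = 1 + sizeOf f + sizeOf bs := by simp
  omega

theorem match_subst : ∀ (N : ℕ) (lam0 : VTerm F), sizeOf lam0 ≤ N →
    ∀ (s : GTerm F) (τ : ℕ → GTerm F),
    (∀ (p : Pos) (f : F) (args : List (VTerm F)), VTerm.subtermAt p lam0 = some (.fn f args) →
      ∃ bs, GTerm.subtermAt p s = some (.fn f bs) ∧ bs.length = args.length) →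
    (∀ (p : Pos) (n : ℕ), VTerm.subtermAt p lam0 = some (.var n) →
      GTerm.subtermAt p s = some (τ n)) →
    s = VTerm.subst τ lam0 := by
  intro N
  induction N with
  | zero =>
    intro l hl
    cases l with
    | var n => intro s τ _ h2; simpa [GTerm.subtermAt, VTerm.subst] using h2 [] n (by simp [VTerm.subtermAt])
    | fn f args =>
      exfalso
      have h2 : sizeOf (VTerm.fn f args) = 1 + sizeOf f + sizeOf args := by simp
      omega
  | succ N ihN =>
    intro l hl s τ h1 h2
    cases l with
    | var n => simpa [GTerm.subtermAt, VTerm.subst] using h2 [] n (by simp [VTerm.subtermAt])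
    | fn f args =>
      obtain ⟨bs, hbs, hlen⟩ := h1 [] f args (by simp [VTerm.subtermAt])
      simp only [GTerm.subtermAt, Option.some.injEq] at hbs
      subst hbs
      simp only [VTerm.subst, GTerm.fn.injEq, true_and]
      apply List.ext_getElem?
      intro i
      rw [VTerm.substList_getElem?]
      cases ha : args[i]? with
      | none =>
        have hi : args.length ≤ i := by
          by_contra hlt
          simp [List.getElem?_eq_getElem (by omega : i < args.length)] at ha
        simp [List.getElem?_eq_none (by omega : bs.length ≤ i)]
      | some a =>
        have hi : i < args.length := by
          by_contra hlt
          simp [List.getElem?_eq_none (by omega : args.length ≤ i)] at ha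
        have hb : bs[i]? = some (bs[i]'(by omega)) := by
          simp [List.getElem?_eq_getElem (by omega : i < bs.length)]
        rw [hb, Option.map_some]
        congr 1
        refine ihN a ?_ _ τ ?_ ?_
        · have := VTerm.sizeOf_lt_of_getElem? (f := f) ha
          omega
        · intro p f' args' hp
          have := h1 (i :: p) f' args' (by simp [VTerm.subtermAt, ha, hp])
          simpa [GTerm.subtermAt, hb] using this
        · intro p n hp
          have := h2 (i :: p) n (by simp [VTerm.subtermAt, ha, hp])
          simpa [GTerm.subtermAt, hb] using this

theorem pos_decomp : ∀ (u : Pos) (rho : VTerm F) (σ : ℕ → GTerm F) (g : GTerm F),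
    GTerm.subtermAt u (VTerm.subst σ rho) = some g →
    (∃ f args, VTerm.subtermAt u rho = some (.fn f args)) ∨
      ∃ u' n v'', u = u' ++ v'' ∧ VTerm.subtermAt u' rho = some (.var n) := by
  intro u
  induction u with
  | nil =>
    intro rho σ g _
    cases rho with
    | var n => exact Or.inr ⟨[], n, [], rfl, by simp [VTerm.subtermAt]⟩
    | fn f args => exact Or.inl ⟨f, args, by simp [VTerm.subtermAt]⟩
  | cons i u ih =>
    intro rho σ g hg
    cases rho with
    | var n => exact Or.inr ⟨[], n, i :: u, rfl, by simp [VTerm.subtermAt]⟩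
    | fn f args =>
      simp only [VTerm.subst, GTerm.subtermAt, VTerm.substList_getElem?] at hg
      cases ha : args[i]? with
      | none => simp [ha] at hg
      | some a =>
        simp only [ha, Option.map_some, Option.bind_some] at hg
        rcases ih a σ g hg with ⟨f', args', h⟩ | ⟨u', n, v'', hu, h⟩
        · exact Or.inl ⟨f', args', by simp [VTerm.subtermAt, ha, h]⟩
        · exact Or.inr ⟨i :: u', n, v'', by simp [hu], by simp [VTerm.subtermAt, ha, h]⟩

end Lemmas5
section Lemmas6
variable {F : Type}

theorem gshape_eq_some_iff {o : Option (GTerm F)} {f : F} {k : ℕ} :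
    gshape o = some (f, k) ↔ ∃ bs, o = some (GTerm.fn f bs) ∧ bs.length = k := by
  cases o with
  | none => simp [gshape]
  | some t =>
    cases t with
    | fn f' args' =>
      constructor
      · intro h
        simp only [gshape, Option.some.injEq, Prod.mk.injEq] at h
        exact ⟨args', by rw [h.1], h.2⟩
      · rintro ⟨bs, h1, h2⟩
        simp only [Option.some.injEq] at h1
        cases h1
        simp [gshape, h2]

theorem slice_subtermAt_fn {P : Set Pos} {p : Pos} {t : GTerm F} {f : F} {args : List (GTerm F)}
    (hp : p ∈ P) (h : GTerm.subtermAt p t = some (.fn f args)) :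
    STerm.subtermAt p (GTerm.slice t P) = some (.fn f (GTerm.slRecList P args p 0)) := by
  have h1 := GTerm.slRec_subtermAt P (t := t) ([]) ⟨[], by simpa using hp⟩ h
  rw [GTerm.slice, h1]
  have hcond : ∃ w, ([] ++ p) ++ w ∈ P := ⟨[], by simpa using hp⟩
  simp only [List.nil_append] at hcond
  simp only [GTerm.slRec, List.nil_append, if_pos hcond]

end Lemmas6
theorem redex_embedded_and_concretizations_rewrite {F α : Type} (lam rho : VTerm F)
    (q : Pos) (σ : ℕ → GTerm F) (t0 t1 : GTerm F) (Ls Lt : Pos → Set α)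
    (hL : ElemStepLabeling F α lam rho q σ t0 t1 Ls Lt)
    (hll : leftLinear lam) (hnc : nonCollapsing rho)
    (P1 : Set Pos) (hP1 : ∀ w ∈ P1, GTerm.isPos w t1)
    (hinv : ∃ w ∈ P1, q <+: w)
    (P0 : Set Pos) (hP0 : P0 = ⋃ w ∈ P1, originSet t0 t1 Ls Lt w) :
    (∀ v', VTerm.patPos v' lam →
        STerm.rootSymAt (q ++ v') (GTerm.slice t0 P0) = VTerm.rootSymAt v' lam) ∧
    (∀ t0' : GTerm F, Conc (GTerm.slice t0 P0) t0' →
        ∃ t1' : GTerm F, RewritesAt lam rho q t0' t1' ∧ Conc (GTerm.slice t1 P1) t1') := by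
  classical
  obtain ⟨hsub, hrepl, atoms, inj, ctx_eq, contr, subst_eq⟩ := hL
  obtain ⟨w₁, hw₁P, u₁, hu₁⟩ := hinv
  -- basic facts about t1
  have ht1u : ∀ u, GTerm.subtermAt (q ++ u) t1 = GTerm.subtermAt u (VTerm.subst σ rho) := by
    intro u
    rw [hrepl]
    exact GTerm.replaceAt_subtermAt hsub u (VTerm.subst σ rho)
  have ht1q : GTerm.subtermAt q t1 = some (VTerm.subst σ rho) := by
    have := ht1u []
    simpa [GTerm.subtermAt] using this
  have hshape01 : ∀ p, ¬ q <+: p →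
      gshape (GTerm.subtermAt p t1) = gshape (GTerm.subtermAt p t0) := by
    intro p hp
    rw [hrepl]
    exact GTerm.replaceAt_shape hp t0 (VTerm.subst σ rho)
  have hrho0 : VTerm.patPos ([] : Pos) rho := by
    cases rho with
    | var n => exact absurd rfl (hnc n)
    | fn g rargs => exact ⟨g, rargs, by simp [VTerm.subtermAt]⟩
  -- Fact A : redex pattern positions are in P0
  have hA : ∀ v', VTerm.patPos v' lam → (q ++ v') ∈ P0 := by
    intro v' hv'
    obtain ⟨f, args, hf⟩ := hv'
    have hst0 : GTerm.subtermAt (q ++ v') t0 = some (VTerm.subst σ (.fn f args)) := by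
      rw [GTerm.subtermAt_append, hsub, Option.bind_some]
      exact VTerm.subst_subtermAt σ hf
    have hLtq := contr [] hrho0
    simp only [List.append_nil] at hLtq
    rw [hP0]
    refine Set.mem_biUnion hw₁P ⟨by simp [GTerm.isPos, hst0], q,
      by simp [GTerm.isPos, ht1q], ⟨u₁, hu₁⟩, ?_⟩
    intro a ha
    rw [hLtq]
    exact Set.mem_biUnion (show v' ∈ {p : Pos | VTerm.patPos p lam} from ⟨f, args, hf⟩) ha
  -- Fact B : preserved context positions are in P0
  have hB : ∀ p w₀, (p ++ w₀) ∈ P1 → ¬ q <+: p → GTerm.isPos p t0 → GTerm.isPos p t1 →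
      p ∈ P0 := by
    intro p w₀ hw hqp h0 h1
    rw [hP0]
    exact Set.mem_biUnion hw ⟨h0, p, h1, ⟨w₀, rfl⟩, by rw [ctx_eq p hqp]⟩
  -- Fact C : substitution positions
  have hC : ∀ u' n v'' w₀, VTerm.subtermAt u' rho = some (.var n) →
      ∀ v', VTerm.subtermAt v' lam = some (.var n) →
      ((q ++ u' ++ v'') ++ w₀) ∈ P1 → GTerm.isPos (q ++ v' ++ v'') t0 →
      GTerm.isPos (q ++ u' ++ v'') t1 → (q ++ v' ++ v'') ∈ P0 := by
    intro u' n v'' w₀ hu' v' hv' hw h0 h1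
    rw [hP0]
    exact Set.mem_biUnion hw ⟨h0, q ++ u' ++ v'', h1, ⟨w₀, rfl⟩,
      by rw [subst_eq u' n v'' hu' v' hv']⟩
  -- slice of t0 at pattern positions
  have hslice0 : ∀ v' (f : F) (args : List (VTerm F)),
      VTerm.subtermAt v' lam = some (.fn f args) →
      STerm.subtermAt (q ++ v') (GTerm.slice t0 P0) =
        some (.fn f (GTerm.slRecList P0 (VTerm.substList σ args) (q ++ v') 0)) := by
    intro v' f args hf
    have hst0 : GTerm.subtermAt (q ++ v') t0 = some (.fn f (VTerm.substList σ args)) :=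
      by
      rw [GTerm.subtermAt_append, hsub, Option.bind_some]
      exact VTerm.subst_subtermAt σ hf
    exact slice_subtermAt_fn (hA v' ⟨f, args, hf⟩) hst0
  constructor
  · -- first conjunct
    intro v' hv'
    obtain ⟨f, args, hf⟩ := hv'
    rw [STerm.rootSymAt, hslice0 v' f args hf, VTerm.rootSymAt, hf]
    simp [STerm.rootSym, VTerm.rootSym]
  · -- second conjunct
    intro t0' hconc
    -- redex pattern embedded in t0'
    have hemb : ∀ (p : Pos) (f : F) (args : List (VTerm F)),
        VTerm.subtermAt p lam = some (.fn f args) →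
        ∃ bs, GTerm.subtermAt (q ++ p) t0' = some (.fn f bs) ∧ bs.length = args.length := by
      intro p f args hf
      obtain ⟨bs, h1, h2⟩ := conc_subtermAt hconc (hslice0 p f args hf)
      rw [GTerm.slRecList_length, VTerm.substList_length] at h2
      exact ⟨bs, h1, h2.symm⟩
    -- every prefix of q is a position of t0'
    have hpre : ∀ p, p <+: q → ∃ s, GTerm.subtermAt p t0' = some s := by
      intro p hp
      induction p using List.reverseRecOn with
      | nil => exact ⟨t0', by simp [GTerm.subtermAt]⟩
      | append_singleton p i ihp =>
        have hpq : p <+: q := (List.prefix_append p [i]).trans hp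
        obtain ⟨r, hr⟩ := hp
        have hq0 : GTerm.isPos (p ++ [i]) t0 := by
          rw [← hr] at hsub
          obtain ⟨z, hz⟩ := GTerm.subtermAt_prefix hsub
          simp [GTerm.isPos, hz]
        obtain ⟨z, hz⟩ : ∃ z, GTerm.subtermAt p t0 = some z := by
          rw [← hr, List.append_assoc] at hsub
          exact GTerm.subtermAt_prefix hsub
        cases z with
        | fn f args =>
        have hi : ∃ a, args[i]? = some a := by
          rw [GTerm.isPos, GTerm.subtermAt_append, hz, Option.bind_some] at hq0
          cases ha : args[i]? with
          | none => rw [GTerm.subtermAt] at hq0; simp [ha] at hq0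
          | some a => exact ⟨a, rfl⟩
        obtain ⟨a, ha⟩ := hi
        have hqp : ¬ q <+: p := by
          intro hcon
          have h1 := hcon.length_le
          have h2 : q.length = p.length + 1 + r.length := by
            rw [← hr]; simp; omega
          omega
        have hpos1 : GTerm.isPos p t1 := by
          have := hshape01 p hqp
          rw [hz] at this
          rw [GTerm.isPos]
          cases ht : GTerm.subtermAt p t1 with
          | none => rw [ht] at this; simp [gshape] at this
          | some z' => simp
        have hmem : p ∈ P0 := by
          refine hB p (([i] ++ r) ++ u₁) ?_ hqp (by simp [GTerm.isPos, hz]) hpos1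
          rw [show p ++ ([i] ++ r ++ u₁) = (p ++ [i] ++ r) ++ u₁ by simp, hr, hu₁]
          exact hw₁P
        have hsl := slice_subtermAt_fn hmem hz
        obtain ⟨bs, hb1, hb2⟩ := conc_subtermAt hconc hsl
        rw [GTerm.slRecList_length] at hb2
        have hib : i < bs.length := by
          have : i < args.length := by
            by_contra hlt
            simp [List.getElem?_eq_none (by omega : args.length ≤ i)] at ha
          omega
        refine ⟨bs[i]'hib, ?_⟩
        rw [GTerm.subtermAt_append, hb1, Option.bind_some, GTerm.subtermAt,
          List.getElem?_eq_getElem hib]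
        simp [GTerm.subtermAt]
    obtain ⟨s0, hs0⟩ := hpre q List.prefix_rfl
    -- the matching substitution
    set σ' : ℕ → GTerm F := fun n =>
      if h : ∃ p, VTerm.subtermAt p lam = some (VTerm.var n) then
        (GTerm.subtermAt (q ++ h.choose) t0').getD (σ n)
      else σ n with hσ'
    -- value of σ' at variables of lam
    have hvar : ∀ (v' : Pos) (n : ℕ), VTerm.subtermAt v' lam = some (.var n) →
        GTerm.subtermAt (q ++ v') t0' = some (σ' n) := by
      intro v' n hv'
      have hex : ∃ p, VTerm.subtermAt p lam = some (VTerm.var n) := ⟨v', hv'⟩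
      have hch : hex.choose = v' := hll n hex.choose v' hex.choose_spec hv'
      have hsome : ∃ s, GTerm.subtermAt (q ++ v') t0' = some s := by
        induction v' using List.reverseRecOn with
        | nil => exact ⟨s0, by simpa using hs0⟩
        | append_singleton v'' i ih =>
          rw [VTerm.subtermAt_append] at hv'
          cases hz : VTerm.subtermAt v'' lam with
          | none => rw [hz] at hv'; simp at hv'
          | some z =>
            rw [hz, Option.bind_some] at hv'
            cases z with
            | var m => simp [VTerm.subtermAt] at hv'
            | fn f args =>
              have hargs : args[i]? = some (VTerm.var n) := by
                rw [VTerm.subtermAt] at hv'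
                cases ha : args[i]? with
                | none => simp [ha] at hv'
                | some a =>
                  rw [ha, Option.bind_some, VTerm.subtermAt] at hv'
                  exact hv'
              obtain ⟨bs, hbs, hlen⟩ := hemb v'' f args hz
              have hib : i < bs.length := by
                have : i < args.length := by
                  by_contra hlt
                  simp [List.getElem?_eq_none (by omega : args.length ≤ i)] at hargs
                omega
              refine ⟨bs[i]'hib, ?_⟩
              rw [show q ++ (v'' ++ [i]) = (q ++ v'') ++ [i] by simp,
                GTerm.subtermAt_append, hbs, Option.bind_some, GTerm.subtermAt,
                List.getElem?_eq_getElem hib]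
              simp [GTerm.subtermAt]
      obtain ⟨s, hs⟩ := hsome
      have hσn : σ' n = s := by
        rw [hσ']
        simp only [dif_pos hex]
        rw [hch, hs, Option.getD_some]
      rw [hσn, hs]
    -- t0' at q matches lam
    have hmatch : s0 = VTerm.subst σ' lam := by
      refine match_subst (sizeOf lam) lam le_rfl s0 σ' ?_ ?_
      · intro p f args hp
        obtain ⟨bs, h1, h2⟩ := hemb p f args hp
        refine ⟨bs, ?_, h2⟩
        rw [GTerm.subtermAt_append, hs0, Option.bind_some] at h1
        exact h1
      · intro p n hp
        have h1 := hvar p n hp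
        rw [GTerm.subtermAt_append, hs0, Option.bind_some] at h1
        exact h1
    refine ⟨GTerm.replaceAt t0' q (VTerm.subst σ' rho),
      ⟨σ', by rw [hs0, hmatch], rfl⟩, ?_⟩
    -- the resulting term is a concretization of slice(t1, P1)
    refine conc_of_pointwise (sizeOf (GTerm.replaceAt t0' q (VTerm.subst σ' rho))) _
      le_rfl _ ?_
    intro p f as hp
    rw [GTerm.slice] at hp
    obtain ⟨args, hargs, hlen, w₀, hw₀⟩ := GTerm.slRec_subtermAt_fn P1 ([]) hp
    simp only [List.nil_append] at hw₀
    suffices hsh : gshape (GTerm.subtermAt p (GTerm.replaceAt t0' q (VTerm.subst σ' rho))) =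
        some (f, args.length) by
      obtain ⟨bs, hb1, hb2⟩ := gshape_eq_some_iff.mp hsh
      exact ⟨bs, hb1, by omega⟩
    by_cases hqp : q <+: p
    · -- below the rewrite position
      obtain ⟨u, rfl⟩ := hqp
      rw [ht1u u] at hargs
      rw [GTerm.replaceAt_subtermAt hs0 u (VTerm.subst σ' rho)]
      rcases pos_decomp u rho σ _ hargs with ⟨f', rargs, hr⟩ | ⟨u', n, v'', rfl, hr⟩
      · -- contractum pattern position
        have h1 : GTerm.subtermAt u (VTerm.subst σ rho) =
            some (.fn f' (VTerm.substList σ rargs)) := VTerm.subst_subtermAt σ hr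
        rw [hargs, Option.some.injEq] at h1
        obtain ⟨hf, hargs2⟩ : f = f' ∧ args = VTerm.substList σ rargs := by
          cases h1; exact ⟨rfl, rfl⟩
        subst hf
        have h2 : GTerm.subtermAt u (VTerm.subst σ' rho) =
            some (.fn f (VTerm.substList σ' rargs)) := VTerm.subst_subtermAt σ' hr
        rw [h2]
        simp [gshape, hargs2, VTerm.substList_length]
      · -- below a variable of rho
        have hσsub : ∀ τ : ℕ → GTerm F, GTerm.subtermAt (u' ++ v'') (VTerm.subst τ rho) =
            GTerm.subtermAt v'' (τ n) := by
          intro τ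
          rw [GTerm.subtermAt_append, VTerm.subst_subtermAt τ hr, Option.bind_some,
            VTerm.subst]
        rw [hσsub σ] at hargs
        rw [hσsub σ']
        by_cases hocc : ∃ p, VTerm.subtermAt p lam = some (VTerm.var n)
        · obtain ⟨v', hv'⟩ := hocc
          -- position q ++ v' ++ v'' of t0
          have hpos0 : GTerm.subtermAt (q ++ v' ++ v'') t0 = some (.fn f args) := by
            rw [List.append_assoc, GTerm.subtermAt_append, hsub, Option.bind_some,
              GTerm.subtermAt_append, VTerm.subst_subtermAt σ hv', Option.bind_some]
            exact hargs
          have hpos1 : GTerm.isPos (q ++ u' ++ v'') t1 := by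
            rw [GTerm.isPos, List.append_assoc, ht1u (u' ++ v''), hσsub σ, hargs]
            simp
          have hmem : (q ++ v' ++ v'') ∈ P0 := by
            refine hC u' n v'' w₀ hr v' hv' ?_
              (by simp only [GTerm.isPos, hpos0, Option.isSome_some]) hpos1
            rw [List.append_assoc q u' v'']
            exact hw₀
          have hsl := slice_subtermAt_fn hmem hpos0
          obtain ⟨bs, hb1, hb2⟩ := conc_subtermAt hconc hsl
          rw [GTerm.slRecList_length] at hb2
          have hqv' : GTerm.subtermAt (q ++ v') t0' = some (σ' n) := hvar v' n hv'
          have hfin : GTerm.subtermAt v'' (σ' n) = some (.fn f bs) := by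
            rw [GTerm.subtermAt_append (q ++ v') v'', hqv', Option.bind_some] at hb1
            exact hb1
          rw [hfin]
          simp [gshape, hb2]
        · have hσn : σ' n = σ n := by
            rw [hσ']
            simp only [dif_neg hocc]
          rw [hσn, hargs]
          simp [gshape]
    · -- context position
      have hsh1 : gshape (GTerm.subtermAt p t0) = some (f, args.length) := by
        rw [← hshape01 p hqp, hargs]
        simp [gshape]
      obtain ⟨args₀, h0, hlen0⟩ := gshape_eq_some_iff.mp hsh1
      have hmem : p ∈ P0 :=
        hB p w₀ hw₀ hqp (by simp [GTerm.isPos, h0]) (by simp [GTerm.isPos, hargs])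
      have hsl := slice_subtermAt_fn hmem h0
      obtain ⟨bs, hb1, hb2⟩ := conc_subtermAt hconc hsl
      rw [GTerm.slRecList_length] at hb2
      rw [GTerm.replaceAt_shape hqp t0' (VTerm.subst σ' rho), hb1]
      simp [gshape]
      omega
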